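/- For n ≥ 1, define the n-th Legendre polynomial via Rodrigues' formula, Pₙ(x) = (1/(2ⁿ n!)) · dⁿ/dxⁿ (x² − 1)ⁿ. Then for every n times continuously differentiable f : ℝ → ℝ and every x₀ ∈ ℝ, the limit as h → 0⁺ of ((2n+1)! / (2^{n+1} · n! · hⁿ)) · ∫_{-1}^{1} Pₙ(t) f(x₀ + h t) dt exists and equals f⁽ⁿ⁾(x₀). -/

import Mathlib

open Filter Topology intervalIntegral
open Polynomial

/-!
Write `w(y) = (y² - 1)ⁿ`, so that `Pₙ = w⁽ⁿ⁾ / (2ⁿ n!)`. Since `±1` are roots of `w` of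
multiplicity `n`, all derivatives of `w` of order `< n` vanish at `±1`, and `n` integrations by
parts move the derivatives onto `t ↦ f(x₀ + h t)`, whose `n`-th derivative is
`hⁿ f⁽ⁿ⁾(x₀ + h t)`. This cancels the `hⁿ` of the prefactor and leaves an average of `f⁽ⁿ⁾`
against the weight `(1 - t²)ⁿ`, which tends to `f⁽ⁿ⁾(x₀)` times the total weight
`∫₋₁¹ (1 - t²)ⁿ dt = 2²ⁿ⁺¹ (n!)² / (2n+1)!`, the reciprocal of the remaining constant.
-/

section

variable {𝕜 : Type*} [NontriviallyNormedField 𝕜]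

theorem Polynomial.iteratedDeriv_eval (p : 𝕜[X]) (k : ℕ) :
    iteratedDeriv k (fun x => p.eval x) = fun x => (derivative^[k] p).eval x := by
  induction k with
  | zero => rfl
  | succ k ih =>
    ext x
    rw [iteratedDeriv_succ, ih, Function.iterate_succ_apply', Polynomial.deriv]

theorem iteratedDeriv_eval_pow_eq_zero_of_isRoot {q : 𝕜[X]} {s : 𝕜} (hs : q.IsRoot s) {n k : ℕ}
    (hk : k < n) :
    iteratedDeriv k (fun x => q.eval x ^ n) s = 0 := by
  simp_rw [← eval_pow]
  rw [Polynomial.iteratedDeriv_eval]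
  refine eval_eq_zero_of_dvd_of_eval_eq_zero (pow_sub_dvd_iterate_derivative_pow q n k) ?_
  rw [eval_pow, hs.eq_zero, zero_pow (Nat.sub_ne_zero_of_lt hk)]

theorem iteratedDeriv_comp_const_add_mul {f : 𝕜 → 𝕜} {n : ℕ} (hf : ContDiff 𝕜 n f) (x c : 𝕜) :
    iteratedDeriv n (fun t => f (x + c * t)) = fun t => c ^ n * iteratedDeriv n f (x + c * t) := by
  rw [iteratedDeriv_comp_const_mul (f := fun z => f (x + z)) (hf.comp (by fun_prop)),
    iteratedDeriv_comp_const_add]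

end

theorem integral_mul_iteratedDeriv_eq_neg_one_pow_mul {a b : ℝ} {u : ℝ → ℝ} {m : ℕ}
    (hu : ContDiff ℝ m u) (hua : ∀ k < m, iteratedDeriv k u a = 0)
    (hub : ∀ k < m, iteratedDeriv k u b = 0) {g : ℝ → ℝ} (hg : ContDiff ℝ m g) :
    ∫ t in a..b, g t * iteratedDeriv m u t = (-1) ^ m * ∫ t in a..b, iteratedDeriv m g t * u t := by
  induction m generalizing g with
  | zero => simp
  | succ m ih =>
    have hg' : Continuous (deriv g) := hg.continuous_deriv (by simp)
    have hparts := integral_mul_deriv_eq_deriv_mul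
      (fun x _ => (hg.differentiable (by simp) x).hasDerivAt)
      (fun x _ => ((hu.differentiable_iteratedDeriv' m x).hasDerivAt))
      (hg'.intervalIntegrable a b)
      (iteratedDeriv_succ (f := u) ▸ (hu.continuous_iteratedDeriv' _).intervalIntegrable a b)
    rw [← iteratedDeriv_succ, hua m m.lt_succ_self, hub m m.lt_succ_self] at hparts
    rw [hparts, ih (hu.of_le (by simp)) (fun k hk => hua k (hk.trans m.lt_succ_self))
      (fun k hk => hub k (hk.trans m.lt_succ_self)) ((contDiff_succ_iff_deriv.mp hg).2.2),
      ← iteratedDeriv_succ']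
    ring

theorem integral_one_sub_sq_pow_succ (n : ℕ) :
    (2 * n + 3 : ℝ) * ∫ t in (-1 : ℝ)..1, (1 - t ^ 2) ^ (n + 1)
      = (2 * n + 2) * ∫ t in (-1 : ℝ)..1, (1 - t ^ 2) ^ n := by
  have hderiv (t : ℝ) : HasDerivAt (fun t : ℝ => t * (1 - t ^ 2) ^ (n + 1))
      ((2 * n + 3) * (1 - t ^ 2) ^ (n + 1) - (2 * n + 2) * (1 - t ^ 2) ^ n) t := by
    refine ((hasDerivAt_id t).fun_mul
      (((hasDerivAt_pow 2 t).const_sub 1).fun_pow (n + 1))).congr_deriv ?_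
    simp only [id, Nat.add_sub_cancel]
    push_cast
    ring
  have hFTC := integral_eq_sub_of_hasDerivAt (fun t _ => hderiv t)
    ((Continuous.intervalIntegrable (by fun_prop)) (-1) 1)
  rw [integral_sub ((Continuous.intervalIntegrable (by fun_prop)) _ _)
    ((Continuous.intervalIntegrable (by fun_prop)) _ _), integral_const_mul,
    integral_const_mul] at hFTC
  norm_num at hFTC
  linarith

theorem integral_one_sub_sq_pow (n : ℕ) :
    ∫ t in (-1 : ℝ)..1, (1 - t ^ 2) ^ n
      = (2 : ℝ) ^ (2 * n + 1) * (n.factorial : ℝ) ^ 2 / ((2 * n + 1).factorial : ℝ) := by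
  induction n with
  | zero => norm_num
  | succ n ih =>
    have h := integral_one_sub_sq_pow_succ n
    rw [ih] at h
    have hfac : ((n + 1).factorial : ℝ) = (n + 1) * n.factorial := by
      push_cast [Nat.factorial_succ]; ring
    have hfac' : ((2 * (n + 1) + 1).factorial : ℝ)
        = (2 * n + 3) * (2 * n + 2) * (2 * n + 1).factorial := by
      rw [show 2 * (n + 1) + 1 = 2 * n + 1 + 1 + 1 by ring, Nat.factorial_succ, Nat.factorial_succ]
      push_cast; ring
    rw [hfac, hfac', eq_div_iff (by positivity)]
    field_simp at h
    linear_combination (2 * n + 2 : ℝ) * h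

theorem tendsto_integral_mul_comp_add_mul {w g : ℝ → ℝ} (hw : Continuous w) (hg : Continuous g)
    (a b x : ℝ) :
    Tendsto (fun h => ∫ t in a..b, w t * g (x + h * t)) (𝓝 0) (𝓝 ((∫ t in a..b, w t) * g x)) := by
  have hcont : Continuous fun h => ∫ t in a..b, w t * g (x + h * t) :=
    continuous_parametric_intervalIntegral_of_continuous' (by fun_prop) a b
  simpa [integral_mul_const] using hcont.tendsto 0

theorem integral_iteratedDeriv_sq_sub_one_pow_mul {n : ℕ} {g : ℝ → ℝ} (hg : ContDiff ℝ n g) :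
    ∫ t in (-1 : ℝ)..1, iteratedDeriv n (fun y => (y ^ 2 - 1) ^ n) t * g t
      = ∫ t in (-1 : ℝ)..1, (1 - t ^ 2) ^ n * iteratedDeriv n g t := by
  have hvanish (s : ℝ) (hs : s ^ 2 = 1) (k : ℕ) (hk : k < n) :
      iteratedDeriv k (fun y : ℝ => (y ^ 2 - 1) ^ n) s = 0 := by
    have hpoly : (fun y : ℝ => (y ^ 2 - 1) ^ n) = fun y => (X ^ 2 - 1 : ℝ[X]).eval y ^ n := by
      simp
    rw [hpoly]
    exact iteratedDeriv_eval_pow_eq_zero_of_isRoot (by simp [hs]) hk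
  simp_rw [mul_comm _ (g _)]
  rw [integral_mul_iteratedDeriv_eq_neg_one_pow_mul (by fun_prop) (hvanish (-1) (by norm_num))
    (hvanish 1 (by norm_num)) hg, ← integral_const_mul]
  congr 1 with t
  rw [mul_comm, mul_assoc, ← mul_pow]
  ring

theorem legendre_nth_derivative_general (n : ℕ) (P : ℝ → ℝ)
    (hP : ∀ x : ℝ, P x =
      (1 / (2 ^ n * (n.factorial : ℝ))) * iteratedDeriv n (fun y : ℝ => (y ^ 2 - 1) ^ n) x) :
    ∀ f : ℝ → ℝ, ContDiff ℝ (n : ℕ∞) f → ∀ x₀ : ℝ,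
      Tendsto (fun h : ℝ =>
          (((2 * n + 1).factorial : ℝ) / (2 ^ (n + 1) * (n.factorial : ℝ) * h ^ n)) *
            ∫ t in (-1 : ℝ)..1, P t * f (x₀ + h * t))
        (𝓝[>] (0 : ℝ)) (𝓝 (iteratedDeriv n f x₀)) := by
  intro f hf x₀
  replace hf : ContDiff ℝ n f := hf
  have hrescale (h : ℝ) : ∫ t in (-1 : ℝ)..1, P t * f (x₀ + h * t)
      = h ^ n / (2 ^ n * n.factorial) *
        ∫ t in (-1 : ℝ)..1, (1 - t ^ 2) ^ n * iteratedDeriv n f (x₀ + h * t) := by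
    simp_rw [hP, mul_assoc, integral_const_mul]
    rw [integral_iteratedDeriv_sq_sub_one_pow_mul (g := fun t => f (x₀ + h * t))
      (hf.comp (by fun_prop)), iteratedDeriv_comp_const_add_mul hf]
    simp_rw [mul_left_comm _ (h ^ n), integral_const_mul]
    ring
  have hnormalized : ((2 * n + 1).factorial : ℝ) / (2 ^ (2 * n + 1) * n.factorial ^ 2) *
      ∫ t in (-1 : ℝ)..1, (1 - t ^ 2) ^ n = 1 := by
    rw [integral_one_sub_sq_pow]
    field_simp
  have hlim := ((tendsto_integral_mul_comp_add_mul (w := fun t => (1 - t ^ 2) ^ n) (by fun_prop)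
    (hf.continuous_iteratedDeriv' n) (-1) 1 x₀).const_mul
      (((2 * n + 1).factorial : ℝ) / (2 ^ (2 * n + 1) * n.factorial ^ 2))).mono_left
    (nhdsWithin_le_nhds (s := Set.Ioi 0))
  rw [← mul_assoc, hnormalized, one_mul] at hlim
  refine hlim.congr' ?_
  filter_upwards [self_mem_nhdsWithin] with h (hh : 0 < h)
  rw [hrescale, ← mul_assoc]
  congr 1
  field_simp
  ring

/-- Legendre realization of n-th order differentiation by integration: with `Pₙ` defined by
Rodrigues' formula `Pₙ(x) = (1/(2ⁿ n!)) dⁿ/dxⁿ (x²−1)ⁿ`, for every n-times continuously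
differentiable `f` and every `x₀`,
`((2n+1)!/(2^{n+1} n! hⁿ)) ∫_{-1}^{1} Pₙ(t) f(x₀+ht) dt → f⁽ⁿ⁾(x₀)` as `h → 0⁺`. -/
theorem legendre_nth_derivative (n : ℕ) (hn : 1 ≤ n) (P : ℝ → ℝ)
    (hP : ∀ x : ℝ, P x =
      (1 / (2 ^ n * (n.factorial : ℝ))) * iteratedDeriv n (fun y : ℝ => (y ^ 2 - 1) ^ n) x) :
    ∀ f : ℝ → ℝ, ContDiff ℝ (n : ℕ∞) f → ∀ x₀ : ℝ,
      Tendsto (fun h : ℝ =>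
          (((2 * n + 1).factorial : ℝ) / (2 ^ (n + 1) * (n.factorial : ℝ) * h ^ n)) *
            ∫ t in (-1 : ℝ)..1, P t * f (x₀ + h * t))
        (𝓝[>] (0 : ℝ)) (𝓝 (iteratedDeriv n f x₀)) :=
  legendre_nth_derivative_general n P hP
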